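/- Let K be a satisfiable DL-Lite_FR KB and let φ, ψ be membership assertions. Suppose I_K is a model of K such that for every model J of K there is a homomorphism h : Δ → Δ from I_K to J, i.e. h(a) = a for every constant a occurring in K, φ, or ψ, h(A^{I_K}) ⊆ A^J for every concept name A, and (h(o), h(o')) ∈ P^J whenever (o, o') ∈ P^{I_K}, for every role name P. If every model of K satisfies φ or satisfies ψ, then K ⊨ φ or K ⊨ ψ. -/

import Mathlib

namespace DLLite

/-- The countably infinite domain of constants. -/
abbrev Δ : Type := ℕ
/-- Countably infinite set of concept names. -/
abbrev ConceptName : Type := ℕ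
/-- Countably infinite set of role names. -/
abbrev RoleName : Type := ℕ

/-- An interpretation assigns a set of domain elements to each concept name
and a binary relation to each role name; constants are interpreted as themselves. -/
structure Interp where
  concept : ConceptName → Set Δ
  role : RoleName → Set (Δ × Δ)

/-- Basic roles: `P` or `P⁻`. -/
inductive BasicRole where
  | pos (P : RoleName)
  | inv (P : RoleName)
deriving DecidableEq

def BasicRole.interp (R : BasicRole) (I : Interp) : Set (Δ × Δ) :=
  match R with
  | .pos P => I.role P
  | .inv P => {p | (p.2, p.1) ∈ I.role P}

/-- Basic concepts: `A` or `∃R`. -/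
inductive BasicConcept where
  | atom (A : ConceptName)
  | ex (R : BasicRole)
deriving DecidableEq

def BasicConcept.interp (B : BasicConcept) (I : Interp) : Set Δ :=
  match B with
  | .atom A => I.concept A
  | .ex R => {o | ∃ o', (o, o') ∈ R.interp I}

/-- DL-Lite_FR assertions: (negative) concept/role inclusions, functionality
assertions, and membership assertions. -/
inductive Assertion where
  | conceptIncl (B1 B2 : BasicConcept)
  | conceptDisj (B1 B2 : BasicConcept)
  | roleIncl (R1 R2 : BasicRole)
  | roleDisj (R1 R2 : BasicRole)
  | funct (R : BasicRole)
  | memberC (A : ConceptName) (a : Δ)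
  | memberR (P : RoleName) (a b : Δ)
deriving DecidableEq

/-- Satisfaction of an assertion by an interpretation. -/
def Interp.sat (I : Interp) : Assertion → Prop
  | .conceptIncl B1 B2 => B1.interp I ⊆ B2.interp I
  | .conceptDisj B1 B2 => B1.interp I ∩ B2.interp I = ∅
  | .roleIncl R1 R2 => R1.interp I ⊆ R2.interp I
  | .roleDisj R1 R2 => R1.interp I ∩ R2.interp I = ∅
  | .funct R => ∀ o o1 o2, (o, o1) ∈ R.interp I → (o, o2) ∈ R.interp I → o1 = o2
  | .memberC A a => a ∈ I.concept A
  | .memberR P a b => (a, b) ∈ I.role P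

/-- TBox assertions: inclusion or functionality assertions. -/
def Assertion.isTBox : Assertion → Prop
  | .memberC _ _ => False
  | .memberR _ _ _ => False
  | _ => True

/-- Membership (ABox) assertions. -/
def Assertion.isMembership : Assertion → Prop
  | .memberC _ _ => True
  | .memberR _ _ _ => True
  | _ => False

/-- The constants occurring in an assertion. -/
def Assertion.constants : Assertion → Set Δ
  | .memberC _ a => {a}
  | .memberR _ a b => {a, b}
  | _ => ∅

/-- A knowledge base: a finite set of assertions (TBox ∪ ABox). -/
abbrev KB := Finset Assertion

/-- The set of models of a KB. -/
def Mod (K : KB) : Set Interp := {I | ∀ a ∈ K, I.sat a}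

/-- Interpretations falsifying at least one assertion of `K`. -/
def NonMod (K : KB) : Set Interp := {I | ∃ a ∈ K, ¬ I.sat a}

/-- The constants occurring in a KB. -/
def KB.constants (K : KB) : Set Δ := ⋃ a ∈ K, Assertion.constants a

/-- Atoms: ground facts `A(o)` or `P(o,o')`. -/
inductive Atom where
  | c (A : ConceptName) (o : Δ)
  | r (P : RoleName) (o o' : Δ)
deriving DecidableEq

/-- The atom set of an interpretation. -/
def Interp.atoms (I : Interp) : Set Atom :=
  fun a => match a with
  | .c A o => o ∈ I.concept A
  | .r P o o' => (o, o') ∈ I.role P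

/-- Concept or role names (symbols). -/
inductive SName where
  | c (A : ConceptName)
  | r (P : RoleName)
deriving DecidableEq

/-- Atom-based set distance: symmetric difference of atom sets. -/
def distASub (I J : Interp) : Set Atom := symmDiff I.atoms J.atoms
/-- Atom-based cardinality distance. -/
noncomputable def distACard (I J : Interp) : ℕ∞ := (symmDiff I.atoms J.atoms).encard
/-- Symbol-based set distance: names interpreted differently. -/
def distSSub (I J : Interp) : Set SName :=
  fun n => match n with
  | .c A => I.concept A ≠ J.concept A
  | .r P => I.role P ≠ J.role P
/-- Symbol-based cardinality distance. -/
noncomputable def distSCard (I J : Interp) : ℕ∞ := (distSSub I J).encard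

/-- Global expansion w.r.t. a distance. -/
def expGlobD {D : Type} [PartialOrder D] (dist : Interp → Interp → D)
    (M N : Set Interp) : Set Interp :=
  {J | J ∈ N ∧ ∃ I ∈ M, ∀ I' ∈ M, ∀ J' ∈ N, ¬ dist I' J' < dist I J}

/-- Local expansion w.r.t. a distance. -/
def expLocD {D : Type} [PartialOrder D] (dist : Interp → Interp → D)
    (M N : Set Interp) : Set Interp :=
  {J | J ∈ N ∧ ∃ I ∈ M, ∀ J' ∈ N, ¬ dist I J' < dist I J}

inductive LocKind | glob | loc
inductive MeasKind | atoms | symbols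
inductive OrdKind | subset | card

/-- The expansion operator on sets of interpretations for each of the
eight model-based semantics `X^y_z`. -/
def expansionSet : LocKind → MeasKind → OrdKind → Set Interp → Set Interp → Set Interp
  | .glob, .atoms, .subset => expGlobD distASub
  | .glob, .atoms, .card => expGlobD distACard
  | .glob, .symbols, .subset => expGlobD distSSub
  | .glob, .symbols, .card => expGlobD distSCard
  | .loc, .atoms, .subset => expLocD distASub
  | .loc, .atoms, .card => expLocD distACard
  | .loc, .symbols, .subset => expLocD distSSub
  | .loc, .symbols, .card => expLocD distSCard

/-- KB expansion `K ⊕ N` under semantics `X^y_z`. -/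
def expandKB (X : LocKind) (y : MeasKind) (z : OrdKind) (K N : KB) : Set Interp :=
  expansionSet X y z (Mod K) (Mod N)

/-- KB contraction `K ⊖ N` under semantics `X^y_z`. -/
def contractKB (X : LocKind) (y : MeasKind) (z : OrdKind) (K N : KB) : Set Interp :=
  Mod K ∪ expansionSet X y z (Mod K) (NonMod N)

/-- Union of two interpretations. -/
def Interp.union (I1 I2 : Interp) : Interp :=
  ⟨fun A => I1.concept A ∪ I2.concept A, fun P => I1.role P ∪ I2.role P⟩

/-- The support set of an interpretation. -/
def Interp.support (I : Interp) : Set Δ :=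
  (⋃ A, I.concept A) ∪ (⋃ P, {o | ∃ o', (o, o') ∈ I.role P ∨ (o', o) ∈ I.role P})

/-- The image `I^f` of an interpretation under an (injective) map `f`. -/
def Interp.image (I : Interp) (f : Δ → Δ) : Interp :=
  ⟨fun A => f '' I.concept A, fun P => (fun p => (f p.1, f p.2)) '' I.role P⟩

/-- `h` is a homomorphism from `I` to `J`. -/
def IsHom (h : Δ → Δ) (I J : Interp) : Prop :=
  (∀ A, h '' I.concept A ⊆ J.concept A) ∧
  (∀ P o o', (o, o') ∈ I.role P → (h o, h o') ∈ J.role P)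

end DLLite

namespace DLLite

theorem Interp.sat_of_isHom {h : Δ → Δ} {I J : Interp} (hh : IsHom h I J) {χ : Assertion}
    (hχ : χ.isMembership) (hfix : ∀ a ∈ χ.constants, h a = a) (hI : I.sat χ) : J.sat χ := by
  match χ, hχ with
  | .memberC A a, _ =>
    exact hh.1 A ⟨a, hI, hfix a rfl⟩
  | .memberR P a b, _ =>
    have hab := hh.2 P a b hI
    rwa [hfix a (.inl rfl), hfix b (.inr rfl)] at hab

theorem entails_of_sat_of_forall_isHom {K : KB} {IK : Interp} {C : Set Δ}
    (hcan : ∀ J ∈ Mod K, ∃ h, (∀ a ∈ C, h a = a) ∧ IsHom h IK J) {χ : Assertion}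
    (hχ : χ.isMembership) (hC : χ.constants ⊆ C) (hIK : IK.sat χ) :
    ∀ J ∈ Mod K, J.sat χ := fun J hJ ↦ by
  obtain ⟨h, hfix, hh⟩ := hcan J hJ
  exact Interp.sat_of_isHom hh hχ (fun a ha ↦ hfix a (hC ha)) hIK

theorem canonical_model_disjunction_general (K : KB)
    (φ ψ : Assertion) (hφ : φ.isMembership) (hψ : ψ.isMembership)
    (IK : Interp) (hIK : IK ∈ Mod K)
    (hcan : ∀ J ∈ Mod K, ∃ h : Δ → Δ,
      (∀ a ∈ K.constants ∪ φ.constants ∪ ψ.constants, h a = a) ∧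
      (∀ A, h '' IK.concept A ⊆ J.concept A) ∧
      (∀ P o o', (o, o') ∈ IK.role P → (h o, h o') ∈ J.role P))
    (hdisj : ∀ J ∈ Mod K, J.sat φ ∨ J.sat ψ) :
    (∀ J ∈ Mod K, J.sat φ) ∨ (∀ J ∈ Mod K, J.sat ψ) := by
  rcases hdisj IK hIK with hIKφ | hIKψ
  · exact .inl <| entails_of_sat_of_forall_isHom hcan hφ (fun a ha ↦ .inl (.inr ha)) hIKφ
  · exact .inr <| entails_of_sat_of_forall_isHom hcan hψ (fun a ha ↦ .inr ha) hIKψ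

/-- If a satisfiable DL-Lite_FR KB `K` has a canonical model `IK` that maps
homomorphically (fixing the constants of `K`, `φ`, `ψ`) into every model of
`K`, and every model of `K` satisfies `φ` or `ψ` (both membership assertions),
then `K ⊨ φ` or `K ⊨ ψ`. -/
theorem canonical_model_disjunction (K : KB) (hsat : (Mod K).Nonempty)
    (φ ψ : Assertion) (hφ : φ.isMembership) (hψ : ψ.isMembership)
    (IK : Interp) (hIK : IK ∈ Mod K)
    (hcan : ∀ J ∈ Mod K, ∃ h : Δ → Δ,
      (∀ a ∈ K.constants ∪ φ.constants ∪ ψ.constants, h a = a) ∧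
      (∀ A, h '' IK.concept A ⊆ J.concept A) ∧
      (∀ P o o', (o, o') ∈ IK.role P → (h o, h o') ∈ J.role P))
    (hdisj : ∀ J ∈ Mod K, J.sat φ ∨ J.sat ψ) :
    (∀ J ∈ Mod K, J.sat φ) ∨ (∀ J ∈ Mod K, J.sat ψ) :=
  canonical_model_disjunction_general K φ ψ hφ hψ IK hIK hcan hdisj

end DLLite
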